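/- Let p ∈ ℚ with p ≤ -1 and set p' = -2-p (this is the unfolding reflection fixing -1 and ∞; in coprime coordinates p' corresponds to the pair (-a(p)-2b(p), b(p))). Then: if c(p) ≤ 2 then c(p') ≤ 2, and if c(p) > 2 then c(p') < c(p). -/

import Mathlib

/-! Write `p = a / b` in lowest terms. For `p < -1` we have `a < -b < 0`, so `c(p) = -2a`, while
`-2 - p = (-2b - a) / b` is again in lowest terms and has complexity `2b` or `-2a - 2b` according
to the sign of `a + 2b`; both are smaller than `-2a`. The point `p = -1` is fixed, of complexity 2. -/

open Matrix

abbrev V6 := Fin 6 → ℤ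

def C6 : Matrix (Fin 6) (Fin 6) ℤ :=
  !![1,0,-1,-1,1,1;
     0,1,-1,-1,1,1;
     0,0,1,0,-1,-1;
     0,0,0,1,-1,-1;
     0,0,0,0,1,0;
     0,0,0,0,0,1]

/-- The bilinear form `⟨x,y⟩ = xᵀ C y` on `ℤ^6`. -/
def form (x y : V6) : ℤ := x ⬝ᵥ C6.mulVec y

/-- The quaternion `i`. -/
def qI : Quaternion ℤ := ⟨0,1,0,0⟩
/-- The quaternion `j`. -/
def qJ : Quaternion ℤ := ⟨0,0,1,0⟩
/-- The quaternion `k`. -/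
def qK : Quaternion ℤ := ⟨0,0,0,1⟩

instance : DecidableEq (Quaternion ℤ) := fun x y =>
  decidable_of_iff (x.re = y.re ∧ x.imI = y.imI ∧ x.imJ = y.imJ ∧ x.imK = y.imK)
    ⟨fun ⟨h1, h2, h3, h4⟩ => QuaternionAlgebra.ext h1 h2 h3 h4,
     fun h => by subst h; exact ⟨rfl, rfl, rfl, rfl⟩⟩

/-- The quaternion group `H = {±1, ±i, ±j, ±k}`. -/
def Hset : Finset (Quaternion ℤ) := {1, -1, qI, -qI, qJ, -qJ, qK, -qK}

/-- The subset `H⁺ = {1, i, j, k}`. -/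
def Hplus : Finset (Quaternion ℤ) := {1, qI, qJ, qK}

/-- Index type for the three special slopes `0`, `1`, `∞`. -/
inductive Ty | zero | one | inf
deriving DecidableEq

def h0 : V6 := ![0,0,1,1,1,1]
def h1 : V6 := ![1,1,2,2,1,1]
def hinf : V6 := ![1,1,1,1,0,0]

def hTy : Ty → V6
  | .zero => h0
  | .one => h1
  | .inf => hinf

/-- The vectors `v_t^x` for `t ∈ {0,1,∞}` and `x ∈ H⁺`. -/
def vposTy : Ty → Quaternion ℤ → V6
  | .zero, x => if x = 1 then ![0,0,1,0,1,0] else if x = qI then ![-1,0,0,0,0,0]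
      else if x = qJ then ![0,0,1,0,0,1] else ![0,1,1,1,1,1]
  | .one, x => if x = 1 then ![1,0,1,1,1,0] else if x = qI then ![0,1,1,1,1,0]
      else if x = qJ then ![0,0,1,0,0,0] else ![1,1,2,1,1,1]
  | .inf, x => if x = 1 then ![1,0,0,1,0,0] else if x = qI then ![1,1,1,1,1,0]
      else if x = qJ then ![0,0,0,0,0,-1] else ![1,0,1,0,0,0]

/-- The vectors `v_t^x` for `t ∈ {0,1,∞}` and `x ∈ H`, with `v_t^{-x} = h_t - v_t^x`. -/
def vTy (t : Ty) (x : Quaternion ℤ) : V6 :=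
  if x ∈ Hplus then vposTy t x else hTy t - vposTy t (-x)

/-- `a(q)`: numerator, with `a(∞) = 1`. -/
def aQ : WithTop ℚ → ℤ := WithTop.recTopCoe 1 Rat.num

/-- `b(q)`: denominator, with `b(∞) = 0`. -/
def bQ : WithTop ℚ → ℤ := WithTop.recTopCoe 0 (fun x => (x.den : ℤ))

/-- The type `t(q) ∈ {0,1,∞}` of a slope `q`. -/
def tyQ (q : WithTop ℚ) : Ty :=
  if aQ q % 2 = 0 then Ty.zero else if bQ q % 2 = 1 then Ty.one else Ty.inf

/-- `⌊n⌋₂ = n/2` for even `n` and `(n-1)/2` for odd `n`. -/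
def half2 (n : ℤ) : ℤ := if Even n then n / 2 else (n - 1) / 2

/-- `h_q = b(q)·h₀ + a(q)·h_∞`. -/
def hQ (q : WithTop ℚ) : V6 := bQ q • h0 + aQ q • hinf

/-- `v_q^x = v_{t(q)}^x + ⌊b(q)⌋₂·h₀ + ⌊a(q)⌋₂·h_∞`. -/
def vQ (q : WithTop ℚ) (x : Quaternion ℤ) : V6 :=
  vTy (tyQ q) x + half2 (bQ q) • h0 + half2 (aQ q) • hinf

/-- `rk e = ⟨e, h_∞⟩`. -/
def rk (e : V6) : ℤ := form e hinf

/-- `deg e = ⟨h₀, e⟩`. -/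
def degV (e : V6) : ℤ := form h0 e

/-- `e` is positive if `rk e > 0`, or `rk e = 0` and `deg e > 0`. -/
def PosV (e : V6) : Prop := 0 < rk e ∨ (rk e = 0 ∧ 0 < degV e)

/-- `d(p,q) = |a(q)b(p) - a(p)b(q)|`. -/
def dQ (p q : WithTop ℚ) : ℤ := |aQ q * bQ p - aQ p * bQ q|

/-- Complexity `c(p) = |a(p)| + |b(p)| + |a(p)+b(p)|`. -/
def cpx (p : WithTop ℚ) : ℤ := |aQ p| + |bQ p| + |aQ p + bQ p|

theorem Rat.intCast_sub_num (n : ℤ) (q : ℚ) : ((n : ℚ) - q).num = n * q.den - q.num := by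
  have h := Rat.mul_den_eq_num ((n : ℚ) - q)
  rw [Rat.intCast_sub_den, sub_mul, Rat.mul_den_eq_num] at h
  exact_mod_cast h.symm

theorem Rat.num_lt_mul_den_iff {q : ℚ} {n : ℤ} : q.num < n * q.den ↔ q < n := by
  have hden : (0 : ℚ) < q.den := mod_cast q.den_pos
  qify
  rw [← Rat.mul_den_eq_num, mul_lt_mul_iff_left₀ hden]

theorem cpx_coe (q : ℚ) : cpx q = |q.num| + q.den + |q.num + q.den| := by
  simp [cpx, aQ, bQ]

theorem stmt18 (p : ℚ) (h : p ≤ -1) :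
    (cpx (p : WithTop ℚ) ≤ 2 → cpx ((-2 - p : ℚ) : WithTop ℚ) ≤ 2) ∧
    (2 < cpx (p : WithTop ℚ) → cpx ((-2 - p : ℚ) : WithTop ℚ) < cpx (p : WithTop ℚ)) := by
  rcases h.lt_or_eq with hlt | rfl
  · have hnum : p.num < -1 * p.den := Rat.num_lt_mul_den_iff.2 (by simpa using hlt)
    have hden := p.den_pos
    have hreflect : (-2 - p : ℚ) = ((-2 : ℤ) : ℚ) - p := by push_cast; rfl
    rw [hreflect, cpx_coe, cpx_coe, Rat.intCast_sub_num, Rat.intCast_sub_den]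
    grind
  · rw [show (-2 - -1 : ℚ) = -1 by norm_num, cpx_coe]
    norm_num
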